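/- For the Dirichlet Laplacian on Λ_L = {−L,…,L}^d with d ≥ 2, the total mass of the Green's function grows like L^{d+2}: there is a constant c_d > 0 with ∑_{i,j∈Λ_L} (−Δ_{Λ_L})⁻¹_{i,j} ≥ c_d · L^{d+2} for all L ≥ 1. -/

import Mathlib

/-!
Test the Green's function against `u(x) = ∏ᵢ ((L+1)² - xᵢ²)`, the product of the
one-dimensional expected exit times from `{-L,…,L}`. Since each factor satisfies the discrete
equation `g(x-1) + g(x+1) = 2 g(x) - 2` and vanishes just outside the box, `-Δ u` is an average of
products of `d-1` factors, hence `0 < -Δ u ≤ (L+1)^{2(d-1)}`. Positivity of `-Δ u` makes `-Δ`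
positive definite (ground-state transform), and Cauchy–Schwarz for the inner product `⟨-Δ ·, ·⟩`
gives `(∑ u)² ≤ ⟨-Δ u, u⟩ ⟨G 1, 1⟩ ≤ (L+1)^{2(d-1)} (∑ u) ∑ G` for `G = (-Δ)⁻¹`. With `∑ u ≥ (L+1)^{3d}` this
yields `∑ G ≥ (L+1)^{d+2}`.
-/

/-- Sites of the box `Λ_L = {-L,…,L}^d`, encoded as `Fin d → Fin (2L+1)`
(the site `v` corresponds to the lattice point `i ↦ (v i : ℤ) - L`). -/
abbrev LatticeBox (d L : ℕ) := Fin d → Fin (2 * L + 1)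

/-- The matrix of `-Δ_Λ`, the negative lattice Laplacian with Dirichlet boundary
conditions outside `Λ_L`: `(-Δ_Λ f)(i) = f i - (1/(2d)) ∑_{j ∼ i, j ∈ Λ} f j`. -/
noncomputable def dirichletLapMatrix (d L : ℕ) :
    Matrix (LatticeBox d L) (LatticeBox d L) ℝ :=
  fun v w =>
    if v = w then 1
    else if (∑ i, |((v i : ℤ) - (w i : ℤ))|) = 1 then -(1 / (2 * (d : ℝ))) else 0

/-- The center of the box, i.e. the origin of `ℤ^d`. -/
def boxCenter (d L : ℕ) : LatticeBox d L := fun _ => ⟨L, by omega⟩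

open Finset Matrix Function

lemma two_mul_mul_le_div_mul_sq_add {a b : ℝ} (ha : 0 < a) (hb : 0 < b) (s t : ℝ) :
    2 * (s * t) ≤ b / a * s ^ 2 + a / b * t ^ 2 := by
  have key : b / a * s ^ 2 + a / b * t ^ 2 - 2 * (s * t) = (b * s - a * t) ^ 2 / (a * b) := by
    field_simp
    ring
  rw [← sub_nonneg, key]
  positivity

namespace Matrix

variable {ι : Type*} [Fintype ι]

/-- Ground-state transform: each off-diagonal term `M v w * x v * x w` is bounded by AM–GM
with weights `u w / u v` and `u v / u w`. -/
theorem sum_sq_mul_mulVec_div_le {M : Matrix ι ι ℝ} (hM : M.IsSymm)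
    (hM_off : ∀ v w, v ≠ w → M v w ≤ 0) {u : ι → ℝ} (hu : ∀ v, 0 < u v) (x : ι → ℝ) :
    ∑ v, x v ^ 2 * ((M *ᵥ u) v / u v) ≤ x ⬝ᵥ M *ᵥ x := by
  set T : ι → ι → ℝ := fun v w => M v w * (u w / u v * x v ^ 2) with hT
  have hpair : ∀ v w, (T v w + T w v) / 2 ≤ x v * (M v w * x w) := by
    intro v w
    rcases eq_or_ne v w with rfl | hvw
    · simp only [hT, div_self (hu v).ne']
      linarith
    · have hsymm : T w v = M v w * (u v / u w * x w ^ 2) := by rw [hT, hM.apply]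
      rw [hsymm]
      nlinarith [mul_le_mul_of_nonpos_left
        (two_mul_mul_le_div_mul_sq_add (hu v) (hu w) (x v) (x w)) (hM_off v w hvw)]
  have hswap : ∑ v, ∑ w, (T v w + T w v) / 2 = ∑ v, ∑ w, T v w := by
    simp only [add_div, sum_add_distrib]
    rw [sum_comm (f := fun v w => T w v / 2), ← sum_add_distrib]
    simp only [← sum_add_distrib, add_halves]
  calc ∑ v, x v ^ 2 * ((M *ᵥ u) v / u v) = ∑ v, ∑ w, T v w := by
        refine sum_congr rfl fun v _ => ?_
        simp only [hT, mulVec, dotProduct, mul_div_assoc', sum_div, mul_sum]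
        exact sum_congr rfl fun w _ => by ring
    _ ≤ ∑ v, ∑ w, x v * (M v w * x w) := by
        rw [← hswap]
        exact sum_le_sum fun v _ => sum_le_sum fun w _ => hpair v w
    _ = x ⬝ᵥ M *ᵥ x := by simp only [dotProduct, mulVec, mul_sum]

theorem posDef_of_forall_mulVec_pos {M : Matrix ι ι ℝ} (hM : M.IsSymm)
    (hM_off : ∀ v w, v ≠ w → M v w ≤ 0) {u : ι → ℝ} (hu : ∀ v, 0 < u v)
    (hMu : ∀ v, 0 < (M *ᵥ u) v) : M.PosDef := by
  refine PosDef.of_dotProduct_mulVec_pos (isHermitian_iff_isSymm.2 hM) fun x hx => ?_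
  obtain ⟨v, hv⟩ := Function.ne_iff.1 hx
  rw [star_trivial]
  refine lt_of_lt_of_le ?_ (sum_sq_mul_mulVec_div_le hM hM_off hu x)
  exact sum_pos' (fun w _ => mul_nonneg (sq_nonneg _) (div_pos (hMu w) (hu w)).le)
    ⟨v, mem_univ v, mul_pos (pow_two_pos_of_ne_zero hv) (div_pos (hMu v) (hu v))⟩

theorem PosDef.sq_dotProduct_le [DecidableEq ι] {M : Matrix ι ι ℝ} (hM : M.PosDef) (u y : ι → ℝ) :
    (u ⬝ᵥ y) ^ 2 ≤ (u ⬝ᵥ M *ᵥ u) * (y ⬝ᵥ M⁻¹ *ᵥ y) := by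
  set b := M⁻¹ *ᵥ y
  have hMb : M *ᵥ b = y := by
    rw [mulVec_mulVec, mul_nonsing_inv _ ((isUnit_iff_isUnit_det M).1 hM.isUnit), one_mulVec]
  have hsymm : ∀ x z, x ⬝ᵥ M *ᵥ z = z ⬝ᵥ M *ᵥ x := by
    intro x z
    rw [← dotProduct_transpose_mulVec, (isHermitian_iff_isSymm.1 hM.isHermitian).eq]
  have hquad : ∀ t : ℝ, 0 ≤ (u ⬝ᵥ M *ᵥ u) * (t * t) + 2 * (u ⬝ᵥ y) * t + y ⬝ᵥ b := by
    intro t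
    have := hM.posSemidef.dotProduct_mulVec_nonneg (t • u + b)
    rw [star_trivial, mulVec_add, mulVec_smul, hMb] at this
    simp only [dotProduct_add, add_dotProduct, dotProduct_smul, smul_dotProduct,
      smul_eq_mul] at this
    rw [hsymm b u, hMb, dotProduct_comm b y] at this
    linarith
  have := discrim_le_zero hquad
  rw [discrim] at this
  linarith

theorem PosDef.sum_le_mul_sum_inv [DecidableEq ι] {M : Matrix ι ι ℝ} (hM : M.PosDef)
    {u : ι → ℝ} (hu : ∀ v, 0 ≤ u v) (hU : 0 < ∑ v, u v) {B : ℝ} (hMu : ∀ v, (M *ᵥ u) v ≤ B) :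
    ∑ v, u v ≤ B * ∑ v, ∑ w, M⁻¹ v w := by
  have hS : 1 ⬝ᵥ M⁻¹ *ᵥ 1 = ∑ v, ∑ w, M⁻¹ v w := by simp [dotProduct, mulVec]
  have hS_nonneg : 0 ≤ ∑ v, ∑ w, M⁻¹ v w := by
    simpa [hS] using hM.inv.posSemidef.dotProduct_mulVec_nonneg 1
  have hQ : u ⬝ᵥ M *ᵥ u ≤ B * ∑ v, u v := by
    rw [mul_sum, dotProduct]
    exact sum_le_sum fun v _ => by nlinarith [hu v, hMu v]
  have hCS := hM.sq_dotProduct_le u 1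
  rw [dotProduct_one, hS] at hCS
  nlinarith [mul_le_mul_of_nonneg_right hQ hS_nonneg]

end Matrix

section Neighbours

variable {κ : Type*} [Fintype κ] [DecidableEq κ] {n : ℕ}

lemma sum_abs_sub_update (v : κ → Fin n) (i : κ) (a : Fin n) :
    ∑ j, |(v j : ℤ) - (update v i a j : ℤ)| = |(v i : ℤ) - a| := by
  rw [sum_eq_single i (fun j _ hj => by simp [update_of_ne hj]) (by simp), update_self]

lemma exists_eq_update_of_sum_abs_sub_eq_one {v w : κ → Fin n}
    (h : ∑ j, |(v j : ℤ) - w j| = 1) : ∃ i, |(v i : ℤ) - w i| = 1 ∧ w = update v i (w i) := by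
  obtain ⟨i, hi⟩ : ∃ i, v i ≠ w i := by
    by_contra! hvw
    simp [hvw] at h
  have hi_pos : 0 < |(v i : ℤ) - w i| := abs_pos.2 (sub_ne_zero.2 (by omega))
  have hsplit := add_sum_erase univ (fun j => |(v j : ℤ) - w j|) (mem_univ i)
  have hrest : 0 ≤ ∑ j ∈ univ.erase i, |(v j : ℤ) - w j| := sum_nonneg fun _ _ => abs_nonneg _
  refine ⟨i, by omega, funext fun j => ?_⟩
  rcases eq_or_ne j i with rfl | hj
  · simp
  · have hzero := (sum_eq_zero_iff_of_nonneg fun _ _ => abs_nonneg _).1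
      (by omega : ∑ j ∈ univ.erase i, |(v j : ℤ) - w j| = 0) j (mem_erase.2 ⟨hj, mem_univ j⟩)
    rw [update_of_ne hj]
    exact Fin.ext (by have := abs_eq_zero.1 hzero; omega)

lemma sum_ite_sum_abs_sub_eq_one (v : κ → Fin n) (f : (κ → Fin n) → ℝ) :
    ∑ w, (if ∑ j, |(v j : ℤ) - w j| = 1 then f w else 0)
      = ∑ i, ∑ a : Fin n, if |(v i : ℤ) - a| = 1 then f (update v i a) else 0 := by
  rw [← sum_filter, ← Fintype.sum_prod_type', ← sum_filter]
  symm
  refine sum_nbij (fun p => update v p.1 p.2) ?_ ?_ ?_ fun _ _ => rfl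
  · intro p hp
    simpa [sum_abs_sub_update] using hp
  · rintro ⟨i, a⟩ hp ⟨i', a'⟩ hp' heq
    simp only [coe_filter, Set.mem_ofPred_eq, mem_univ, true_and] at hp hp' heq
    have hi := congrFun heq i
    rw [update_self] at hi
    rcases eq_or_ne i i' with rfl | hii
    · rw [update_self] at hi
      rw [hi]
    · rw [update_of_ne hii] at hi
      simp [hi] at hp
  · intro w hw
    simp only [coe_filter, Set.mem_ofPred_eq, mem_univ, true_and] at hw
    obtain ⟨i, hi, hw⟩ := exists_eq_update_of_sum_abs_sub_eq_one hw
    exact ⟨(i, w i), by simpa using hi, hw.symm⟩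

lemma Fin.sum_ite_abs_sub_eq_one (k : Fin n) (F : ℤ → ℝ) (h0 : F (-1) = 0) (hn : F n = 0) :
    ∑ a : Fin n, (if |(k : ℤ) - a| = 1 then F a else 0) = F (k - 1) + F (k + 1) := by
  have hsplit : ∀ m : ℕ, (if |(k : ℤ) - m| = 1 then F m else 0)
      = (if m = (k : ℕ) + 1 then F (k + 1) else 0) + (if m + 1 = k then F (k - 1) else 0) := by
    intro m
    by_cases hup : m = (k : ℕ) + 1
    · subst hup
      simp [show (k : ℕ) + 1 + 1 ≠ k by omega]
    by_cases hdown : m + 1 = k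
    · have hm : (m : ℤ) = k - 1 := by omega
      simp [hm, hup, hdown]
    · have hfar : |(k : ℤ) - m| ≠ 1 := by rw [Ne, abs_eq zero_le_one]; omega
      simp [hup, hdown, hfar]
  rw [Fin.sum_univ_eq_sum_range (fun m => if |(k : ℤ) - m| = 1 then F m else 0) n]
  simp only [hsplit, sum_add_distrib, sum_ite_eq', mem_range]
  have hup : (if (k : ℕ) + 1 < n then F (k + 1) else 0) = F (k + 1) := by
    split_ifs with h
    · rfl
    · rw [show (k : ℤ) + 1 = n by omega, hn]
  rw [hup, add_comm]
  congr 1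
  obtain ⟨_ | j, hk⟩ := k
  · simp [h0]
  · simp [sum_ite_eq', show j < n by omega]

end Neighbours

section DirichletLaplacian

variable {d L : ℕ}

lemma dirichletLapMatrix_isSymm : (dirichletLapMatrix d L).IsSymm := by
  ext v w
  simp only [transpose_apply, dirichletLapMatrix, eq_comm (a := w), abs_sub_comm (w _ : ℤ)]

lemma dirichletLapMatrix_apply_nonpos {v w : LatticeBox d L} (hvw : v ≠ w) :
    dirichletLapMatrix d L v w ≤ 0 := by
  simp only [dirichletLapMatrix, if_neg hvw]
  split_ifs
  · simp only [one_div, Left.neg_nonpos_iff, inv_nonneg]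
    positivity
  · rfl

lemma dirichletLapMatrix_mulVec_apply (x : LatticeBox d L → ℝ) (v : LatticeBox d L) :
    (dirichletLapMatrix d L *ᵥ x) v
      = x v - 1 / (2 * d) * ∑ w, if ∑ i, |(v i : ℤ) - w i| = 1 then x w else 0 := by
  have hentry : ∀ w, dirichletLapMatrix d L v w * x w
      = (if v = w then x w else 0)
        - 1 / (2 * d) * if ∑ i, |(v i : ℤ) - w i| = 1 then x w else 0 := by
    intro w
    rcases eq_or_ne v w with rfl | hvw
    · simp [dirichletLapMatrix]
    · simp only [dirichletLapMatrix, if_neg hvw]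
      split_ifs <;> ring
  simp only [mulVec, dotProduct, hentry, sum_sub_distrib, sum_ite_eq, mem_univ, if_true, mul_sum]

/-- The expected exit time from `{-L,…,L}` of simple random walk on `ℤ` started at `x - L`. -/
noncomputable def exitTime (L : ℕ) (x : ℤ) : ℝ := ((L : ℝ) + 1) ^ 2 - ((x : ℝ) - L) ^ 2

lemma exitTime_sub_one_add_exitTime_add_one (x : ℤ) :
    exitTime L (x - 1) + exitTime L (x + 1) = 2 * exitTime L x - 2 := by
  simp only [exitTime]
  push_cast
  ring

lemma exitTime_neg_one : exitTime L (-1) = 0 := by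
  simp only [exitTime]
  push_cast
  ring

lemma exitTime_two_mul_add_one : exitTime L ((2 * L + 1 : ℕ) : ℤ) = 0 := by
  simp only [exitTime]
  push_cast
  ring

lemma exitTime_le (x : ℤ) : exitTime L x ≤ ((L : ℝ) + 1) ^ 2 :=
  sub_le_self _ (sq_nonneg _)

lemma one_le_exitTime (k : Fin (2 * L + 1)) : 1 ≤ exitTime L k := by
  have hk : ((k : ℕ) : ℝ) ≤ 2 * L := by exact_mod_cast Nat.lt_succ_iff.1 k.isLt
  have hcast : ((k : ℤ) : ℝ) = ((k : ℕ) : ℝ) := rfl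
  simp only [exitTime, hcast]
  nlinarith [(k : ℕ).cast_nonneg (α := ℝ)]

lemma exitTime_pos (k : Fin (2 * L + 1)) : 0 < exitTime L k :=
  one_pos.trans_le (one_le_exitTime k)

lemma sum_range_exitTime (n : ℕ) :
    ∑ k ∈ range n, exitTime L k
      = n * (2 * L + 1) + L * n * (n - 1) - n * (n - 1) * (2 * n - 1) / 6 := by
  induction n with
  | zero => simp
  | succ n ih =>
    rw [sum_range_succ, ih, exitTime]
    push_cast
    ring

lemma pow_three_le_sum_exitTime :
    ((L : ℝ) + 1) ^ 3 ≤ ∑ k : Fin (2 * L + 1), exitTime L k := by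
  rw [Fin.sum_univ_eq_sum_range (fun k => exitTime L k), sum_range_exitTime]
  push_cast
  nlinarith [sq_nonneg (L : ℝ), L.cast_nonneg (α := ℝ)]

noncomputable def exitTimeProd (d L : ℕ) (v : LatticeBox d L) : ℝ := ∏ i, exitTime L (v i)

lemma exitTimeProd_pos (v : LatticeBox d L) : 0 < exitTimeProd d L v :=
  prod_pos fun i _ => exitTime_pos (v i)

lemma exitTimeProd_update (v : LatticeBox d L) (i : Fin d) (a : Fin (2 * L + 1)) :
    exitTimeProd d L (update v i a) = exitTime L a * ∏ j ∈ univ.erase i, exitTime L (v j) := by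
  rw [exitTimeProd, ← mul_prod_erase univ _ (mem_univ i), update_self]
  congr 1
  exact prod_congr rfl fun j hj => by rw [update_of_ne (ne_of_mem_erase hj)]

lemma sum_exitTimeProd :
    ∑ v : LatticeBox d L, exitTimeProd d L v = (∑ k : Fin (2 * L + 1), exitTime L k) ^ d := by
  rw [← Fin.prod_const, Fintype.prod_sum]
  rfl

lemma dirichletLapMatrix_mulVec_exitTimeProd (hd : d ≠ 0) (v : LatticeBox d L) :
    (dirichletLapMatrix d L *ᵥ exitTimeProd d L) v
      = (∑ i, ∏ j ∈ univ.erase i, exitTime L (v j)) / d := by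
  have hcoord : ∀ i, ∑ a : Fin (2 * L + 1),
      (if |(v i : ℤ) - a| = 1 then exitTimeProd d L (update v i a) else 0)
        = 2 * exitTimeProd d L v - 2 * ∏ j ∈ univ.erase i, exitTime L (v j) := by
    intro i
    simp only [exitTimeProd_update, ← ite_zero_mul, ← sum_mul]
    rw [Fin.sum_ite_abs_sub_eq_one _ _ exitTime_neg_one exitTime_two_mul_add_one,
      exitTime_sub_one_add_exitTime_add_one, exitTimeProd, ← mul_prod_erase univ _ (mem_univ i)]
    ring
  rw [dirichletLapMatrix_mulVec_apply, sum_ite_sum_abs_sub_eq_one]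
  simp only [hcoord, sum_sub_distrib, sum_const, card_univ, Fintype.card_fin, nsmul_eq_mul,
    ← mul_sum]
  field_simp
  ring

lemma dirichletLapMatrix_mulVec_exitTimeProd_pos (hd : d ≠ 0) (v : LatticeBox d L) :
    0 < (dirichletLapMatrix d L *ᵥ exitTimeProd d L) v := by
  have : Nonempty (Fin d) := ⟨⟨0, by omega⟩⟩
  rw [dirichletLapMatrix_mulVec_exitTimeProd hd]
  exact div_pos (sum_pos (fun i _ => prod_pos fun j _ => exitTime_pos (v j)) univ_nonempty)
    (by positivity)

lemma dirichletLapMatrix_mulVec_exitTimeProd_le (hd : d ≠ 0) (v : LatticeBox d L) :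
    (dirichletLapMatrix d L *ᵥ exitTimeProd d L) v ≤ (((L : ℝ) + 1) ^ 2) ^ (d - 1) := by
  have hfactor : ∀ i, ∏ j ∈ univ.erase i, exitTime L (v j) ≤ (((L : ℝ) + 1) ^ 2) ^ (d - 1) := by
    intro i
    calc ∏ j ∈ univ.erase i, exitTime L (v j) ≤ ∏ j ∈ univ.erase i, ((L : ℝ) + 1) ^ 2 :=
          prod_le_prod (fun j _ => (exitTime_pos (v j)).le) fun j _ => exitTime_le _
      _ = (((L : ℝ) + 1) ^ 2) ^ (d - 1) := by
          rw [prod_const, card_erase_of_mem (mem_univ i), card_univ, Fintype.card_fin]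
  rw [dirichletLapMatrix_mulVec_exitTimeProd hd, div_le_iff₀ (by positivity)]
  calc ∑ i, ∏ j ∈ univ.erase i, exitTime L (v j) ≤ ∑ _i : Fin d, (((L : ℝ) + 1) ^ 2) ^ (d - 1) :=
        sum_le_sum fun i _ => hfactor i
    _ = _ := by rw [sum_const, card_univ, Fintype.card_fin, nsmul_eq_mul, mul_comm]

end DirichletLaplacian

/-- The total mass of the Dirichlet Green's function on `Λ_L ⊂ ℤ^d`, `d ≥ 2`,
grows at least like `L^{d+2}`. -/
theorem green_total_mass_lower_bound (d : ℕ) (hd : 2 ≤ d) :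
    ∃ c : ℝ, 0 < c ∧ ∀ L : ℕ, 1 ≤ L →
      c * (L : ℝ) ^ (d + 2) ≤ ∑ v : LatticeBox d L, ∑ w : LatticeBox d L,
        (dirichletLapMatrix d L)⁻¹ v w := by
  have hd0 : d ≠ 0 := by omega
  refine ⟨1, one_pos, fun L _ => ?_⟩
  have hM : (dirichletLapMatrix d L).PosDef :=
    posDef_of_forall_mulVec_pos dirichletLapMatrix_isSymm
      (fun _ _ => dirichletLapMatrix_apply_nonpos) exitTimeProd_pos
      (dirichletLapMatrix_mulVec_exitTimeProd_pos hd0)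
  have hmass := hM.sum_le_mul_sum_inv (fun v => (exitTimeProd_pos v).le)
    (sum_pos (fun v _ => exitTimeProd_pos v) univ_nonempty)
    (dirichletLapMatrix_mulVec_exitTimeProd_le hd0)
  have hmass_test : (((L : ℝ) + 1) ^ 3) ^ d ≤ ∑ v, exitTimeProd d L v := by
    rw [sum_exitTimeProd]
    exact pow_le_pow_left₀ (by positivity) pow_three_le_sum_exitTime d
  have hpow : (((L : ℝ) + 1) ^ 2) ^ (d - 1) * ((L : ℝ) + 1) ^ (d + 2) = (((L : ℝ) + 1) ^ 3) ^ d := by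
    rw [← pow_mul, ← pow_mul, ← pow_add]
    congr 1
    omega
  calc 1 * (L : ℝ) ^ (d + 2) ≤ ((L : ℝ) + 1) ^ (d + 2) := by
        rw [one_mul]
        gcongr
        linarith
    _ ≤ _ := le_of_mul_le_mul_left (hpow ▸ hmass_test.trans hmass) (by positivity)
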